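/- Let n, m be positive integers, α a traffic distribution matrix (0 ≤ α_{j,i} ≤ 1, ∑_{j=n+1}^{n+m} α_{j,i} = 1 for each i), and H_{i,j} ∈ ℝ arbitrary. With H_i = ∑_{l=n+1}^{n+m} α_{l,i} H_{i,l} and H_j = ∑_{i=1}^{n} α_{j,i} H_{i,j}, for each j ∈ {n+1,…,n+m} one has H_j = ∑_{i=1}^{n} α_{j,i} H_i + E_j, where E_j = ∑_{i=1}^{n} ∑_{l=n+1, l≠j}^{n+m} α_{j,i} α_{l,i} (H_{i,j} − H_{i,l}). -/
import Mathlib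

/-- Traffic distribution error identity: the outgoing flux `H_j` equals the
a priori distribution `∑ i, α j i * H_i` plus an explicit error term `E_j`. -/
theorem traffic_distribution_error (n m : ℕ) (hn : 0 < n) (hm : 0 < m)
    (α : Fin m → Fin n → ℝ) (H : Fin n → Fin m → ℝ)
    (hα₀ : ∀ j i, 0 ≤ α j i) (hα₁ : ∀ j i, α j i ≤ 1)
    (hcol : ∀ i, ∑ l, α l i = 1) :
    ∀ j : Fin m,
      (∑ i, α j i * H i j)
        = (∑ i, α j i * (∑ l, α l i * H i l))
          + ∑ i, ∑ l ∈ Finset.univ.erase j, α j i * α l i * (H i j - H i l) := by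
  intro j
  rw [← Finset.sum_add_distrib]
  refine Finset.sum_congr rfl fun i _ => ?_
  have hs : (∑ l, α j i * α l i) = α j i := by
    rw [← Finset.mul_sum, hcol i, mul_one]
  have h1 : α j i * H i j = ∑ l, α j i * α l i * H i j := by
    rw [← Finset.sum_mul, hs]
  rw [h1, Finset.mul_sum,
      ← Finset.sum_erase_add _ (fun l => α j i * α l i * H i j) (Finset.mem_univ j),
      ← Finset.sum_erase_add _ (fun l => α j i * (α l i * H i l)) (Finset.mem_univ j),
      add_right_comm, ← Finset.sum_add_distrib]
  refine congrArg₂ (· + ·) (Finset.sum_congr rfl fun l _ => by ring) (by ring)
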